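/- Let y = (y_α)_{|α|≤2} be a tms of degree 2 in 3 variables. Then y admits a representing measure supported on the unit sphere S² = {x ∈ ℝ³ : x₁²+x₂²+x₃² = 1} if and only if the 4×4 moment matrix M₁(y), with rows and columns indexed by the multi-indices (0,0,0), (1,0,0), (0,1,0), (0,0,1) and entries M₁(y)_{αβ} = y_{α+β}, is positive semidefinite and y_{000} = y_{200} + y_{020} + y_{002}. -/

import Mathlib

open MeasureTheory Matrix

noncomputable section

/-- The monomial `x^α = ∏ i, x i ^ α i`. -/
def mono (x : Fin 3 → ℝ) (α : Fin 3 → ℕ) : ℝ := ∏ i, x i ^ α i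

/-- Multi-indices `α ∈ ℕ^n` of degree `|α| ≤ k`. -/
abbrev MIdx (n k : ℕ) := {α : Fin n → Fin (k + 1) // (∑ i, (α i).1) ≤ k}

/-- The multi-index as an element of `ℕ^n`. -/
def MIdx.toNat {n k : ℕ} (α : MIdx n k) : Fin n → ℕ := fun i => (α.1 i).1

/-- The moment matrix of order `k`: `M_k(y)_{αβ} = y_{α+β}` for `|α|,|β| ≤ k`. -/
def momentMatrix (n k : ℕ) (y : (Fin n → ℕ) → ℝ) :
    Matrix (MIdx n k) (MIdx n k) ℝ :=
  Matrix.of fun α β => y (α.toNat + β.toNat)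

/-- The (topological) support of a measure. -/
def measureSupport (μ : Measure (Fin 3 → ℝ)) : Set (Fin 3 → ℝ) :=
  {x | ∀ U : Set (Fin 3 → ℝ), IsOpen U → x ∈ U → μ U ≠ 0}

/-!
Necessity: with `φ(x) = (1, x₁, x₂, x₃)`, the moment matrix is `∫ φ φᵀ dμ`, hence positive
semidefinite, and integrating `x₁² + x₂² + x₃² = 1` gives the trace condition.

Sufficiency: write `M₁(y) = ∑ v vᵀ`. In terms of the Lorentz form `L(t, w) = |w|² - t²` the trace
condition reads `∑ L(v) = 0`. If two summands have `L` of opposite signs, a rotation in their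
plane keeps `v vᵀ + v' v'ᵀ` and makes one of them `L`-isotropic; repeating this makes every summand
isotropic. An isotropic vector is `t • φ(u)` with `|u| = 1`, and `t² φ(u) φ(u)ᵀ` is the moment
matrix of the point mass `t² δ_u`.
-/

namespace QuadraticMap

variable {E F : Type*} [AddCommGroup E] [Module ℝ E] [AddCommGroup F] [Module ℝ F]

theorem map_rotate_add (P : QuadraticMap ℝ E F) {c s : ℝ} (h : c ^ 2 + s ^ 2 = 1) (v w : E) :
    P (c • v + s • w) + P ((-s) • v + c • w) = P v + P w := by
  rw [QuadraticMap.map_add P, QuadraticMap.map_add P]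
  simp only [QuadraticMap.map_smul, polar_smul_left, polar_smul_right]
  linear_combination (norm := module) h • P v + h • P w

theorem exists_rotate_isotropic (Q : QuadraticMap ℝ E ℝ) {v w : E} (h : Q v * Q w ≤ 0) :
    ∃ c s : ℝ, c ^ 2 + s ^ 2 = 1 ∧ Q (c • v + s • w) = 0 := by
  have hQ : ∀ θ, Q (Real.cos θ • v + Real.sin θ • w) = Real.cos θ ^ 2 * Q v
      + Real.sin θ ^ 2 * Q w + Real.cos θ * Real.sin θ * polar Q v w := by
    intro θ
    rw [QuadraticMap.map_add Q]
    simp only [QuadraticMap.map_smul, polar_smul_left, polar_smul_right, smul_eq_mul]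
    ring
  have hcont : Continuous fun θ => Q (Real.cos θ • v + Real.sin θ • w) := by
    simp only [hQ]; fun_prop
  have h0 : (0 : ℝ) ∈ Set.uIcc (Q v) (Q w) := by
    rcases mul_nonpos_iff.1 h with h | h
    · exact Set.mem_uIcc.2 (Or.inr ⟨h.2, h.1⟩)
    · exact Set.mem_uIcc.2 (Or.inl ⟨h.1, h.2⟩)
  obtain ⟨θ, -, hθ⟩ := intermediate_value_uIcc (a := 0) (b := Real.pi / 2)
    hcont.continuousOn (by simpa using h0)
  exact ⟨_, _, Real.cos_sq_add_sin_sq θ, hθ⟩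

theorem exists_isotropic_decomposition (Q : QuadraticMap ℝ E ℝ) (P : QuadraticMap ℝ E F)
    (s : Multiset E) (hs : (s.map Q).sum = 0) :
    ∃ t : Multiset E, (∀ x ∈ t, Q x = 0) ∧ (t.map P).sum = (s.map P).sum := by
  induction hn : Multiset.card s using Nat.strong_induction_on generalizing s with
  | _ n ih =>
  by_cases hiso : ∀ x ∈ s, Q x = 0
  · exact ⟨s, hiso, rfl⟩
  push Not at hiso
  obtain ⟨v, hv, hQv⟩ := hiso
  obtain ⟨s₁, rfl⟩ := Multiset.exists_cons_of_mem hv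
  rw [Multiset.map_cons, Multiset.sum_cons] at hs
  obtain ⟨w, hw, hvw⟩ : ∃ w ∈ s₁, Q v * Q w ≤ 0 := by
    by_contra! hpos
    have : 0 ≤ (s₁.map fun w => Q v * Q w).sum :=
      Multiset.sum_nonneg fun _ hx => by
        obtain ⟨w, hw, rfl⟩ := Multiset.mem_map.1 hx
        exact (hpos w hw).le
    rw [Multiset.sum_map_mul_left, show (s₁.map Q).sum = -Q v by linarith] at this
    nlinarith [sq_pos_of_ne_zero hQv]
  obtain ⟨s₂, rfl⟩ := Multiset.exists_cons_of_mem hw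
  obtain ⟨c, σ, hcσ, hx⟩ := Q.exists_rotate_isotropic hvw
  have hrotQ := Q.map_rotate_add hcσ v w
  have hrotP := P.map_rotate_add hcσ v w
  obtain ⟨t, ht, htP⟩ := ih _ (by simp [← hn]) (((-σ) • v + c • w) ::ₘ s₂)
    (by simp only [Multiset.map_cons, Multiset.sum_cons] at hs ⊢; linarith) rfl
  refine ⟨(c • v + σ • w) ::ₘ t, ?_, ?_⟩
  · simpa [hx] using ht
  · simp only [Multiset.map_cons, Multiset.sum_cons, htP, ← add_assoc, hrotP]

end QuadraticMap

namespace MIdx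

variable {n k : ℕ}

def zero : MIdx n k := ⟨0, by simp⟩

def single (i : Fin n) : MIdx n 1 := ⟨Pi.single i 1, by simp [Pi.single_apply, apply_ite Fin.val]⟩

@[simp]
lemma toNat_zero : (zero : MIdx n k).toNat = 0 := rfl

@[simp]
lemma toNat_single (i : Fin n) : (single i).toNat = Pi.single i 1 := by
  ext j
  by_cases h : j = i <;> simp [toNat, single, h]

lemma eq_zero_or_eq_single (a : MIdx 3 1) : a = zero ∨ ∃ i, a = single i := by
  revert a; decide

lemma exists_toNat_add_eq {α : Fin n → ℕ} (hα : ∑ i, α i ≤ 2) :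
    ∃ a b : MIdx n 1, a.toNat + b.toNat = α := by
  by_cases h0 : α = 0
  · exact ⟨zero, zero, by simp [h0]⟩
  obtain ⟨i, hi⟩ : ∃ i, α i ≠ 0 := Function.ne_iff.1 h0
  set β := α - Pi.single i 1
  have hαβ : Pi.single i 1 + β = α := by
    ext j; by_cases h : j = i
    · subst h
      simp only [β, Pi.add_apply, Pi.sub_apply, Pi.single_eq_same]
      omega
    · simp [β, h]
  have hβ : ∑ j, β j ≤ 1 := by
    have := congrArg (fun f : Fin n → ℕ => ∑ j, f j) hαβ
    simp only [Pi.add_apply, Finset.sum_add_distrib, Finset.sum_pi_single', Finset.mem_univ,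
      if_true] at this
    omega
  refine ⟨single i, ⟨fun j => ⟨β j, Nat.lt_succ_of_le ?_⟩, hβ⟩, by rw [toNat_single]; exact hαβ⟩
  exact (Finset.single_le_sum (fun _ _ => Nat.zero_le _) (Finset.mem_univ j)).trans hβ

lemma sum_toNat_add_le (a b : MIdx n 1) : ∑ i, (a.toNat + b.toNat) i ≤ 2 := by
  have ha : ∑ i, a.toNat i ≤ 1 := a.2
  have hb : ∑ i, b.toNat i ≤ 1 := b.2
  simp only [Pi.add_apply, Finset.sum_add_distrib]
  omega

end MIdx

lemma mono_add (x : Fin 3 → ℝ) (α β : Fin 3 → ℕ) : mono x (α + β) = mono x α * mono x β := by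
  simp [mono, pow_add, Finset.prod_mul_distrib]

@[simp]
lemma mono_zero (x : Fin 3 → ℝ) : mono x 0 = 1 := by simp [mono]

@[simp]
lemma mono_single (x : Fin 3 → ℝ) (i : Fin 3) : mono x (Pi.single i 1) = x i := by
  simp [mono, Pi.single_apply, pow_ite]

lemma continuous_mono (α : Fin 3 → ℕ) : Continuous fun x => mono x α := by
  unfold mono; fun_prop

def unitSphere : Set (Fin 3 → ℝ) := {x | x 0 ^ 2 + x 1 ^ 2 + x 2 ^ 2 = 1}

lemma isClosed_unitSphere : IsClosed unitSphere :=
  isClosed_eq (by fun_prop) continuous_const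

lemma abs_mono_le_one {x : Fin 3 → ℝ} (hx : x ∈ unitSphere) (α : Fin 3 → ℕ) : |mono x α| ≤ 1 := by
  have hxi (i : Fin 3) : |x i| ≤ 1 := by
    have hx : x 0 ^ 2 + x 1 ^ 2 + x 2 ^ 2 = 1 := hx
    refine (sq_le_one_iff_abs_le_one _).1 ?_
    fin_cases i <;> simp only [Fin.zero_eta, Fin.mk_one, Fin.reduceFinMk] <;>
      nlinarith [sq_nonneg (x 0), sq_nonneg (x 1), sq_nonneg (x 2)]
  rw [mono, Finset.abs_prod]
  exact Finset.prod_le_one (fun _ _ => by positivity) fun i _ => by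
    rw [abs_pow]; exact pow_le_one₀ (abs_nonneg _) (hxi i)

def monoVec (x : Fin 3 → ℝ) : MIdx 3 1 → ℝ := fun a => mono x a.toNat

@[simp]
lemma monoVec_zero (x : Fin 3 → ℝ) : monoVec x MIdx.zero = 1 := by simp [monoVec]

@[simp]
lemma monoVec_single (x : Fin 3 → ℝ) (i : Fin 3) : monoVec x (MIdx.single i) = x i := by
  simp [monoVec]

def outerSq {ι : Type*} : QuadraticMap ℝ (ι → ℝ) (Matrix ι ι ℝ) :=
  LinearMap.BilinMap.toQuadraticMap (vecMulVecBilin ℝ ℝ)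

@[simp]
lemma outerSq_apply {ι : Type*} (x : ι → ℝ) : outerSq x = vecMulVec x x := rfl

def lorentzTrace : Matrix (MIdx 3 1) (MIdx 3 1) ℝ →ₗ[ℝ] ℝ :=
  ∑ i, entryLinearMap ℝ ℝ (MIdx.single i) (MIdx.single i) - entryLinearMap ℝ ℝ MIdx.zero MIdx.zero

/-- Factored through `lorentzTrace` so that its sum over a decomposition `M = ∑ x xᵀ` is
`lorentzTrace M`. -/
def lorentz : QuadraticMap ℝ (MIdx 3 1 → ℝ) ℝ := lorentzTrace.compQuadraticMap outerSq

lemma lorentzTrace_apply (M : Matrix (MIdx 3 1) (MIdx 3 1) ℝ) :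
    lorentzTrace M = ∑ i, M (MIdx.single i) (MIdx.single i) - M MIdx.zero MIdx.zero := by
  simp [lorentzTrace]

lemma lorentz_apply (x : MIdx 3 1 → ℝ) :
    lorentz x = ∑ i, x (MIdx.single i) ^ 2 - x MIdx.zero ^ 2 := by
  simp [lorentz, lorentzTrace_apply, vecMulVec_apply, sq]

lemma lorentzTrace_momentMatrix (y : (Fin 3 → ℕ) → ℝ) :
    lorentzTrace (momentMatrix 3 1 y)
      = y ![2, 0, 0] + y ![0, 2, 0] + y ![0, 0, 2] - y ![0, 0, 0] := by
  simp only [lorentzTrace_apply, momentMatrix, of_apply, Fin.sum_univ_three, MIdx.toNat_single,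
    MIdx.toNat_zero]
  congr 4 <;> decide

lemma exists_eq_smul_monoVec {x : MIdx 3 1 → ℝ} (hx : lorentz x = 0) :
    ∃ u ∈ unitSphere, x = x MIdx.zero • monoVec u := by
  rw [lorentz_apply, Fin.sum_univ_three, sub_eq_zero] at hx
  by_cases h0 : x MIdx.zero = 0
  · have hi (i : Fin 3) : x (MIdx.single i) = 0 := by
      rw [h0] at hx
      fin_cases i <;> simp <;> nlinarith [sq_nonneg (x (MIdx.single 0)),
        sq_nonneg (x (MIdx.single 1)), sq_nonneg (x (MIdx.single 2))]
    refine ⟨![1, 0, 0], by simp [unitSphere], funext fun a => ?_⟩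
    rcases MIdx.eq_zero_or_eq_single a with rfl | ⟨i, rfl⟩ <;> simp [h0, hi]
  · refine ⟨fun i => x (MIdx.single i) / x MIdx.zero, ?_, funext fun a => ?_⟩
    · simp only [unitSphere, Set.mem_ofPred_eq, div_pow]
      field_simp
      linarith
    · rcases MIdx.eq_zero_or_eq_single a with rfl | ⟨i, rfl⟩
      · simp
      · simp [mul_div_cancel₀ _ h0]

section AtomicMeasure

variable {X : Type*} [MeasurableSpace X]

def atomicMeasure (A : Multiset (ℝ × X)) : Measure X :=
  (A.map fun p => ENNReal.ofReal p.1 • Measure.dirac p.2).sum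

lemma ae_mem_atomicMeasure {A : Multiset (ℝ × X)} {K : Set X} (hK : MeasurableSet K)
    (hA : ∀ p ∈ A, p.2 ∈ K) : ∀ᵐ x ∂atomicMeasure A, x ∈ K := by
  induction A using Multiset.induction_on with
  | empty => simp [atomicMeasure]
  | cons p A ih =>
    simp only [atomicMeasure, Multiset.map_cons, Multiset.sum_cons] at ih ⊢
    rw [ae_add_measure_iff]
    exact ⟨Measure.ae_smul_measure ((ae_dirac_iff hK).2 (hA p (by simp))) _,
      ih fun q hq => hA q (by simp [hq])⟩

variable [MeasurableSingletonClass X]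

lemma integrable_atomicMeasure (A : Multiset (ℝ × X)) (g : X → ℝ) :
    Integrable g (atomicMeasure A) := by
  induction A using Multiset.induction_on with
  | empty => simp [atomicMeasure]
  | cons p A ih =>
    simp only [atomicMeasure, Multiset.map_cons, Multiset.sum_cons] at ih ⊢
    exact ((integrable_dirac (by simp)).smul_measure ENNReal.ofReal_ne_top).add_measure ih

lemma integral_atomicMeasure {A : Multiset (ℝ × X)} (hA : ∀ p ∈ A, 0 ≤ p.1) (g : X → ℝ) :
    ∫ x, g x ∂atomicMeasure A = (A.map fun p => p.1 * g p.2).sum := by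
  induction A using Multiset.induction_on with
  | empty => simp [atomicMeasure]
  | cons p A ih =>
    have hrest := integrable_atomicMeasure A g
    simp only [atomicMeasure, Multiset.map_cons, Multiset.sum_cons] at ih hrest ⊢
    rw [integral_add_measure
        ((integrable_dirac (by simp)).smul_measure ENNReal.ofReal_ne_top) hrest,
      integral_smul_measure, integral_dirac, ENNReal.toReal_ofReal (hA p (by simp)), smul_eq_mul,
      ih fun q hq => hA q (by simp [hq])]

end AtomicMeasure

lemma measureSupport_eq_support (μ : Measure (Fin 3 → ℝ)) : measureSupport μ = μ.support := by
  ext x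
  rw [(nhds_basis_opens x).mem_measureSupport]
  simp only [measureSupport, Set.mem_ofPred_eq, pos_iff_ne_zero, and_imp]
  exact forall_congr' fun U => Imp.swap

lemma measureSupport_subset_iff {μ : Measure (Fin 3 → ℝ)} {K : Set (Fin 3 → ℝ)}
    (hK : IsClosed K) :
    measureSupport μ ⊆ K ↔ ∀ᵐ x ∂μ, x ∈ K := by
  rw [measureSupport_eq_support]
  exact ⟨fun h => Filter.mem_of_superset Measure.support_mem_ae h,
    Measure.support_subset_of_isClosed hK⟩

lemma integrable_mono {μ : Measure (Fin 3 → ℝ)} [IsFiniteMeasure μ]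
    (hμ : ∀ᵐ x ∂μ, x ∈ unitSphere) (α : Fin 3 → ℕ) : Integrable (fun x => mono x α) μ :=
  .of_bound (continuous_mono α).aestronglyMeasurable 1 <| hμ.mono fun _ hx => abs_mono_le_one hx α

lemma momentMatrix_posSemidef {y : (Fin 3 → ℕ) → ℝ} {μ : Measure (Fin 3 → ℝ)}
    (hint : ∀ α, Integrable (fun x => mono x α) μ)
    (hmom : ∀ α : Fin 3 → ℕ, (∑ i, α i) ≤ 2 → y α = ∫ x, mono x α ∂μ) :
    (momentMatrix 3 1 y).PosSemidef := by
  have hentry (a b : MIdx 3 1) :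
      momentMatrix 3 1 y a b = ∫ x, monoVec x a * monoVec x b ∂μ := by
    simp only [momentMatrix, of_apply, hmom _ (MIdx.sum_toNat_add_le a b), monoVec, mono_add]
  have hint₂ (a b : MIdx 3 1) : Integrable (fun x => monoVec x a * monoVec x b) μ := by
    simpa only [monoVec, mono_add] using hint (a.toNat + b.toNat)
  refine .of_dotProduct_mulVec_nonneg ?_ fun W => ?_
  · ext a b
    simp [momentMatrix, add_comm]
  have hsq (x : Fin 3 → ℝ) :
      (W ⬝ᵥ monoVec x) ^ 2 = ∑ a, ∑ b, W a * W b * (monoVec x a * monoVec x b) := by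
    simp only [sq, dotProduct, Finset.sum_mul_sum]
    exact Finset.sum_congr rfl fun a _ => Finset.sum_congr rfl fun b _ => by ring
  calc 0 ≤ ∫ x, (W ⬝ᵥ monoVec x) ^ 2 ∂μ := integral_nonneg fun _ => sq_nonneg _
    _ = ∑ a, ∑ b, W a * W b * ∫ x, monoVec x a * monoVec x b ∂μ := by
      simp only [hsq, ← integral_const_mul]
      rw [integral_finsetSum _ fun a _ => integrable_finsetSum _ fun b _ =>
        (hint₂ a b).const_mul _]
      exact Finset.sum_congr rfl fun a _ =>
        integral_finsetSum _ fun b _ => (hint₂ a b).const_mul _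
    _ = star W ⬝ᵥ momentMatrix 3 1 y *ᵥ W := by
      simp only [hentry, dotProduct, mulVec, Finset.mul_sum, star_trivial]
      exact Finset.sum_congr rfl fun a _ => Finset.sum_congr rfl fun b _ => by ring

lemma mass_eq_trace_of_ae_mem_unitSphere {y : (Fin 3 → ℕ) → ℝ} {μ : Measure (Fin 3 → ℝ)}
    (hμ : ∀ᵐ x ∂μ, x ∈ unitSphere) (hint : ∀ α, Integrable (fun x => mono x α) μ)
    (hmom : ∀ α : Fin 3 → ℕ, (∑ i, α i) ≤ 2 → y α = ∫ x, mono x α ∂μ) :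
    y ![0, 0, 0] = y ![2, 0, 0] + y ![0, 2, 0] + y ![0, 0, 2] := by
  have hsum : (fun x => mono x ![0, 0, 0]) =ᵐ[μ]
      (fun x => mono x ![2, 0, 0] + mono x ![0, 2, 0] + mono x ![0, 0, 2]) :=
    hμ.mono fun x hx => by simp [mono, Fin.prod_univ_three]; exact hx.symm
  rw [hmom _ (by decide), hmom _ (by decide), hmom _ (by decide), hmom _ (by decide),
    integral_congr_ae hsum, integral_add _ (hint _), integral_add (hint _) (hint _)]
  exact (hint _).add (hint _)

theorem exists_atoms_of_posSemidef {y : (Fin 3 → ℕ) → ℝ} (hM : (momentMatrix 3 1 y).PosSemidef)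
    (htr : y ![0, 0, 0] = y ![2, 0, 0] + y ![0, 2, 0] + y ![0, 0, 2]) :
    ∃ A : Multiset (ℝ × (Fin 3 → ℝ)), (∀ p ∈ A, 0 ≤ p.1 ∧ p.2 ∈ unitSphere) ∧
      ∀ a b : MIdx 3 1, y (a.toNat + b.toNat)
        = (A.map fun p => p.1 * mono p.2 (a.toNat + b.toNat)).sum := by
  obtain ⟨m, v, hv⟩ := posSemidef_iff_eq_sum_vecMulVec.1 hM
  have hsP : ((Finset.univ.val.map v).map outerSq).sum = momentMatrix 3 1 y := by
    simp [hv, Finset.sum_eq_multiset_sum, Function.comp_def]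
  have hsQ : ((Finset.univ.val.map v).map lorentz).sum = 0 := by
    have hcomp : lorentz = lorentzTrace ∘ outerSq := rfl
    rw [hcomp, ← Multiset.map_map, ← map_multiset_sum, hsP, lorentzTrace_momentMatrix, htr]
    ring
  obtain ⟨t, ht, htP⟩ := lorentz.exists_isotropic_decomposition outerSq _ hsQ
  choose! u hu hxu using fun x (hx : x ∈ t) => exists_eq_smul_monoVec (ht x hx)
  refine ⟨t.map fun x => (x MIdx.zero ^ 2, u x), ?_, fun a b => ?_⟩
  · simpa using fun x hx => ⟨sq_nonneg _, hu x hx⟩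
  · have hentry : y (a.toNat + b.toNat) = entryLinearMap ℝ ℝ a b (t.map outerSq).sum := by
      rw [htP, hsP]; rfl
    rw [hentry, map_multiset_sum, Multiset.map_map, Multiset.map_map]
    congr 1
    refine Multiset.map_congr rfl fun x hx => ?_
    simp only [Function.comp_apply, entryLinearMap_apply, outerSq_apply, vecMulVec_apply, mono_add]
    rw [congrFun (hxu x hx) a, congrFun (hxu x hx) b]
    simp only [Pi.smul_apply, smul_eq_mul, monoVec]
    ring

/-- a tms `y` of degree 2 in 3 variables admits a representing measure
supported on the unit sphere `S²` if and only if the `4×4` moment matrix `M₁(y)` is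
positive semidefinite and `y₀₀₀ = y₂₀₀ + y₀₂₀ + y₀₀₂`. -/
theorem degree_two_tms_sphere (y : (Fin 3 → ℕ) → ℝ) :
    (∃ μ : Measure (Fin 3 → ℝ), IsFiniteMeasure μ ∧
        measureSupport μ ⊆ {x | x 0 ^ 2 + x 1 ^ 2 + x 2 ^ 2 = 1} ∧
        ∀ α : Fin 3 → ℕ, (∑ i, α i) ≤ 2 → y α = ∫ x, mono x α ∂μ)
    ↔ ((momentMatrix 3 1 y).PosSemidef ∧
        y ![0, 0, 0] = y ![2, 0, 0] + y ![0, 2, 0] + y ![0, 0, 2]) := by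
  constructor
  · rintro ⟨μ, hfin, hsupp, hmom⟩
    have hμ := (measureSupport_subset_iff isClosed_unitSphere).1 hsupp
    have hint := integrable_mono hμ
    exact ⟨momentMatrix_posSemidef hint hmom, mass_eq_trace_of_ae_mem_unitSphere hμ hint hmom⟩
  · rintro ⟨hM, htr⟩
    obtain ⟨A, hA, hmom⟩ := exists_atoms_of_posSemidef hM htr
    refine ⟨atomicMeasure A, ?_, ?_, fun α hα => ?_⟩
    · exact (integrable_const_iff_isFiniteMeasure one_ne_zero).1
        (integrable_atomicMeasure A _)
    · exact (measureSupport_subset_iff isClosed_unitSphere).2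
        (ae_mem_atomicMeasure isClosed_unitSphere.measurableSet fun p hp => (hA p hp).2)
    · obtain ⟨a, b, rfl⟩ := MIdx.exists_toNat_add_eq hα
      rw [hmom, integral_atomicMeasure fun p hp => (hA p hp).1]
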